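/- arXiv:2306.13340 — 4 statements merged into one kernel-verified Lean document; each statement's English description precedes it below -/
import Mathlib

section
/- Let G be a cubic graph. Then G admits a P_10-coloring (that is, P_10 ≺ G) if and only if G admits a normal 5-edge-coloring. -/
open SimpleGraph

/-- A proper edge-coloring of `G` with `n` colors: a map on `Sym2 V` such that distinct
edges of `G` sharing a vertex receive distinct colors. -/
def ProperEdgeColoring {V : Type*} {n : ℕ} (G : SimpleGraph V) (σ : Sym2 V → Fin n) : Prop :=
  ∀ e₁ ∈ G.edgeSet, ∀ e₂ ∈ G.edgeSet, e₁ ≠ e₂ → (∃ v, v ∈ e₁ ∧ v ∈ e₂) → σ e₁ ≠ σ e₂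

/-- The set `σ(v)` of colors appearing on the edges incident to `v`. -/
def colorsAt {V : Type*} {n : ℕ} (G : SimpleGraph V) (σ : Sym2 V → Fin n) (v : V) :
    Set (Fin n) :=
  σ '' G.incidenceSet v

/-- A normal 5-edge-coloring: a proper 5-edge-coloring in which every edge `uv` is
poor (`|σ(u) ∪ σ(v)| = 3`) or rich (`|σ(u) ∪ σ(v)| = 5`). -/
def IsNormalColoring {V : Type*} (G : SimpleGraph V) (σ : Sym2 V → Fin 5) : Prop :=
  ProperEdgeColoring G σ ∧ ∀ u v : V, G.Adj u v →
    (colorsAt G σ u ∪ colorsAt G σ v).ncard = 3 ∨ (colorsAt G σ u ∪ colorsAt G σ v).ncard = 5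

/-- The Petersen graph `P₁₀` as the Kneser graph `K(5,2)`: vertices are the 2-element
subsets of a 5-element set, adjacent iff disjoint. -/
def P10 : SimpleGraph {s : Finset (Fin 5) // s.card = 2} :=
  SimpleGraph.fromRel (fun a b => Disjoint a.1 b.1)

/-- An `H`-coloring of `G`: a map `φ : E(G) → E(H)` such that for every vertex `v` of `G`
there is a vertex `w` of `H` with `φ(∂_G(v)) = ∂_H(w)`. -/
def IsHColoring {V W : Type*} (G : SimpleGraph V) (H : SimpleGraph W)
    (φ : Sym2 V → Sym2 W) : Prop :=
  (∀ e ∈ G.edgeSet, φ e ∈ H.edgeSet) ∧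
  ∀ v : V, ∃ w : W, φ '' G.incidenceSet v = H.incidenceSet w

namespace PetersenAux

abbrev PK := {s : Finset (Fin 5) // s.card = 2}

lemma P10_adj {A B : PK} : P10.Adj A B ↔ Disjoint A.1 B.1 := by
  rw [P10, SimpleGraph.fromRel_adj]
  constructor
  · rintro ⟨h, h' | h'⟩
    · exact h'
    · exact h'.symm
  · intro h
    refine ⟨?_, Or.inl h⟩
    rintro rfl
    rw [disjoint_self] at h
    have h2 := A.2
    rw [Finset.bot_eq_empty] at h
    rw [h] at h2
    simp at h2

lemma card_union_of_adj {A B : PK} (h : P10.Adj A B) : (A.1 ∪ B.1).card = 4 := by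
  rw [Finset.card_union_of_disjoint (P10_adj.mp h), A.2, B.2]

lemma compl_union_nonempty (A B : PK) : ((A.1 ∪ B.1)ᶜ : Finset (Fin 5)).Nonempty := by
  rw [← Finset.card_pos, Finset.card_compl]
  have h1 : (A.1 ∪ B.1).card ≤ 4 := by
    calc (A.1 ∪ B.1).card ≤ A.1.card + B.1.card := Finset.card_union_le _ _
    _ = 4 := by rw [A.2, B.2]
  have h2 : Fintype.card (Fin 5) = 5 := by simp
  omega

/-- The canonical coloring of the edges of the Petersen graph: color an edge by the unique
element of `Fin 5` avoided by (the union of) its two endpoints. -/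
noncomputable def pcol : Sym2 PK → Fin 5 :=
  Sym2.lift ⟨fun A B => ((A.1 ∪ B.1)ᶜ : Finset (Fin 5)).min' (compl_union_nonempty A B),
    fun A B => by simp [Finset.union_comm]⟩

lemma pcol_notMem (A B : PK) : pcol s(A, B) ∉ A.1 ∪ B.1 := by
  have := Finset.min'_mem _ (compl_union_nonempty A B)
  rw [Finset.mem_compl] at this
  exact this

lemma compl_eq_singleton_pcol {A B : PK} (h : P10.Adj A B) :
    ((A.1 ∪ B.1)ᶜ : Finset (Fin 5)) = {pcol s(A, B)} := by
  have hc : ((A.1 ∪ B.1)ᶜ : Finset (Fin 5)).card = 1 := by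
    rw [Finset.card_compl, card_union_of_adj h]
    simp
  obtain ⟨x, hx⟩ := Finset.card_eq_one.mp hc
  have hm : pcol s(A, B) ∈ ((A.1 ∪ B.1)ᶜ : Finset (Fin 5)) :=
    Finset.mem_compl.mpr (pcol_notMem A B)
  rw [hx] at hm ⊢
  rw [Finset.mem_singleton] at hm
  rw [hm]

lemma union_eq_of_adj {A B : PK} (h : P10.Adj A B) :
    A.1 ∪ B.1 = ({pcol s(A, B)}ᶜ : Finset (Fin 5)) := by
  rw [← compl_eq_singleton_pcol h, compl_compl]

lemma pcol_eq {A B : PK} (h : P10.Adj A B) {x : Fin 5} (hx : x ∉ A.1 ∪ B.1) :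
    pcol s(A, B) = x := by
  have := compl_eq_singleton_pcol h
  have hm : x ∈ ((A.1 ∪ B.1)ᶜ : Finset (Fin 5)) := Finset.mem_compl.mpr hx
  rw [this, Finset.mem_singleton] at hm
  exact hm.symm

/-- Any edge incident to `v` is of the form `s(v,u)` for a neighbor `u`. -/
lemma exists_rep {V : Type*} {G : SimpleGraph V} {v : V} {e : Sym2 V}
    (h : e ∈ G.incidenceSet v) : ∃ u, G.Adj v u ∧ e = s(v, u) := by
  obtain ⟨he, hv⟩ := h
  induction e with
  | h x y =>
    have hadj : G.Adj x y := G.mem_edgeSet.mp he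
    rcases Sym2.mem_iff.mp hv with rfl | rfl
    · exact ⟨y, hadj, rfl⟩
    · exact ⟨x, hadj.symm, Sym2.eq_swap⟩

lemma ncard_incidenceSet {V : Type*} (G : SimpleGraph V) (v : V)
    (h : (G.neighborSet v).ncard = 3) : (G.incidenceSet v).ncard = 3 := by
  classical
  rw [← Nat.card_coe_set_eq] at h ⊢
  rw [Nat.card_congr (G.incidenceSetEquivNeighborSet v)]
  exact h

lemma P10_cubic (w : PK) : (P10.neighborSet w).ncard = 3 := by
  have himg : Subtype.val '' P10.neighborSet w
      = ((w.1ᶜ.powersetCard 2 : Finset (Finset (Fin 5))) : Set (Finset (Fin 5))) := by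
    ext s
    simp only [Set.mem_image, SimpleGraph.mem_neighborSet, Finset.mem_coe,
      Finset.mem_powersetCard]
    constructor
    · rintro ⟨B, hB, rfl⟩
      have hd := P10_adj.mp hB
      refine ⟨fun a ha => Finset.mem_compl.mpr fun haw => ?_, B.2⟩
      exact Finset.disjoint_left.mp hd haw ha
    · rintro ⟨hs, hc⟩
      refine ⟨⟨s, hc⟩, P10_adj.mpr ?_, rfl⟩
      exact Finset.disjoint_left.mpr fun a ha has => (Finset.mem_compl.mp (hs has)) ha
  have : (P10.neighborSet w).ncard = (Subtype.val '' P10.neighborSet w).ncard :=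
    (Set.ncard_image_of_injective _ Subtype.val_injective).symm
  rw [this, himg, Set.ncard_coe_finset, Finset.card_powersetCard]
  rw [Finset.card_compl, w.2]
  rfl

lemma colorsAt_P10 (w : PK) : colorsAt P10 pcol w = ((w.1ᶜ : Finset (Fin 5)) : Set (Fin 5)) := by
  ext x
  constructor
  · rintro ⟨e, he, rfl⟩
    obtain ⟨B, hadj, rfl⟩ := exists_rep he
    have := pcol_notMem w B
    simp only [Finset.mem_union, not_or] at this
    simpa using this.1
  · intro hx
    have hxw : x ∉ w.1 := by simpa using hx
    have hcard : (insert x w.1).card = 3 := by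
      rw [Finset.card_insert_of_notMem hxw, w.2]
    have hBc : ((insert x w.1)ᶜ : Finset (Fin 5)).card = 2 := by
      rw [Finset.card_compl, hcard]; rfl
    set B : PK := ⟨(insert x w.1)ᶜ, hBc⟩ with hBdef
    have hd : Disjoint w.1 B.1 := by
      refine Finset.disjoint_left.mpr fun a ha hab => ?_
      exact (Finset.mem_compl.mp hab) (Finset.mem_insert_of_mem ha)
    have hadj : P10.Adj w B := P10_adj.mpr hd
    refine ⟨s(w, B), (SimpleGraph.mk'_mem_incidenceSet_left_iff P10).mpr hadj, ?_⟩
    apply pcol_eq hadj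
    simp only [Finset.mem_union, not_or]
    exact ⟨hxw, by simp [hBdef]⟩

lemma pcol_injOn_incidence (w : PK) :
    ∀ e₁ ∈ P10.incidenceSet w, ∀ e₂ ∈ P10.incidenceSet w, pcol e₁ = pcol e₂ → e₁ = e₂ := by
  intro e₁ h₁ e₂ h₂ hc
  obtain ⟨B₁, hadj₁, rfl⟩ := exists_rep h₁
  obtain ⟨B₂, hadj₂, rfl⟩ := exists_rep h₂
  have hu : w.1 ∪ B₁.1 = w.1 ∪ B₂.1 := by
    rw [union_eq_of_adj hadj₁, union_eq_of_adj hadj₂, hc]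
  have hB : B₁.1 = B₂.1 := by
    have h1 := Finset.union_sdiff_cancel_left (P10_adj.mp hadj₁)
    have h2 := Finset.union_sdiff_cancel_left (P10_adj.mp hadj₂)
    rw [← h1, ← h2, hu]
  have : B₁ = B₂ := Subtype.ext hB
  rw [this]



noncomputable def SvF {V : Type*} (G : SimpleGraph V) (σ : Sym2 V → Fin 5) (v : V) :
    Finset (Fin 5) :=
  (colorsAt G σ v).toFinite.toFinset

noncomputable def mkK (s : Finset (Fin 5)) : {s : Finset (Fin 5) // s.card = 2} :=
  if h : s.card = 2 then Subtype.mk s h else Subtype.mk {0, 1} (by decide)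

lemma mkK_eq {s : Finset (Fin 5)} (h : s.card = 2) : (mkK s).1 = s := by
  unfold mkK
  rw [dif_pos h]

noncomputable def phiOf {V : Type*} (G : SimpleGraph V) (σ : Sym2 V → Fin 5) :
    Sym2 V → Sym2 PK :=
  Sym2.lift ⟨fun u v =>
    if SvF G σ u = SvF G σ v then s(mkK ((SvF G σ u)ᶜ), mkK (SvF G σ u \ {σ s(u, v)}))
    else s(mkK ((SvF G σ u)ᶜ), mkK ((SvF G σ v)ᶜ)), by
      intro u v
      dsimp only
      have hswap : s(u, v) = s(v, u) := Sym2.eq_swap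
      by_cases h : SvF G σ u = SvF G σ v
      · rw [if_pos h, if_pos h.symm, h, hswap]
      · rw [if_neg h, if_neg fun h' => h h'.symm]
        exact Sym2.eq_swap⟩

end PetersenAux

open PetersenAux in
/-- A cubic graph `G` admits a `P₁₀`-coloring (i.e. `P₁₀ ≺ G`) iff it admits a
normal 5-edge-coloring. -/
theorem petersen_coloring_iff_normal_five_edge_coloring
    {V : Type*} [Fintype V] (G : SimpleGraph V)
    (hcubic : ∀ v : V, (G.neighborSet v).ncard = 3) :
    (∃ φ : Sym2 V → Sym2 {s : Finset (Fin 5) // s.card = 2}, IsHColoring G P10 φ) ↔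
    (∃ σ : Sym2 V → Fin 5, IsNormalColoring G σ) := by
  classical
  constructor
  · rintro ⟨φ, hmap, hvert⟩
    choose w hw using hvert
    refine ⟨fun e => pcol (φ e), ?_, ?_⟩
    · -- properness
      rintro e₁ h₁ e₂ h₂ hne ⟨x, hx₁, hx₂⟩
      have hm₁ : e₁ ∈ G.incidenceSet x := ⟨h₁, hx₁⟩
      have hm₂ : e₂ ∈ G.incidenceSet x := ⟨h₂, hx₂⟩
      -- φ is injective on the incidence set of x
      have hfin : (G.incidenceSet x).Finite := Set.toFinite _
      have hnc : (G.incidenceSet x).ncard = 3 := ncard_incidenceSet G x (hcubic x)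
      have hncw : (P10.incidenceSet (w x)).ncard = 3 :=
        ncard_incidenceSet P10 (w x) (P10_cubic (w x))
      have himg : (φ '' G.incidenceSet x).ncard = (G.incidenceSet x).ncard := by
        rw [hw x, hncw, hnc]
      have hinj : Set.InjOn φ (G.incidenceSet x) := by
        apply hfin.injOn_of_encard_image_eq
        rw [← (hfin.image φ).cast_ncard_eq, ← hfin.cast_ncard_eq, himg]
      intro hc
      have hφ₁ : φ e₁ ∈ P10.incidenceSet (w x) := by
        rw [← hw x]; exact ⟨e₁, hm₁, rfl⟩
      have hφ₂ : φ e₂ ∈ P10.incidenceSet (w x) := by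
        rw [← hw x]; exact ⟨e₂, hm₂, rfl⟩
      have : φ e₁ = φ e₂ := pcol_injOn_incidence (w x) _ hφ₁ _ hφ₂ hc
      exact hne (hinj hm₁ hm₂ this)
    · -- poor or rich
      intro u v huv
      have hcol : ∀ z : V, colorsAt G (fun e => pcol (φ e)) z
          = (((w z).1ᶜ : Finset (Fin 5)) : Set (Fin 5)) := by
        intro z
        rw [colorsAt, show (fun e => pcol (φ e)) = pcol ∘ φ from rfl, Set.image_comp,
          hw z, ← colorsAt_P10 (w z)]
        rfl
      rw [hcol u, hcol v, ← Finset.coe_union, Set.ncard_coe_finset]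
      by_cases hww : w u = w v
      · left
        rw [hww, Finset.union_self, Finset.card_compl, (w v).2]
        rfl
      · right
        have h1 : w u ∈ φ s(u, v) := by
          have : φ s(u, v) ∈ P10.incidenceSet (w u) := by
            rw [← hw u]
            exact ⟨s(u, v), (SimpleGraph.mk'_mem_incidenceSet_left_iff G).mpr huv, rfl⟩
          exact this.2
        have h2 : w v ∈ φ s(u, v) := by
          have : φ s(u, v) ∈ P10.incidenceSet (w v) := by
            rw [← hw v]
            exact ⟨s(u, v), (SimpleGraph.mk'_mem_incidenceSet_right_iff G).mpr huv, rfl⟩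
          exact this.2
        have hedge : φ s(u, v) ∈ P10.edgeSet := hmap _ (G.mem_edgeSet.mpr huv)
        have heq : φ s(u, v) = s(w u, w v) := (Sym2.mem_and_mem_iff hww).mp ⟨h1, h2⟩
        rw [heq] at hedge
        have hd : Disjoint (w u).1 (w v).1 := P10_adj.mp (P10.mem_edgeSet.mp hedge)
        have huniv : (w u).1ᶜ ∪ (w v).1ᶜ = Finset.univ := by
          rw [← Finset.compl_inter, Finset.disjoint_iff_inter_eq_empty.mp hd]
          simp
        rw [huniv]
        simp
  · rintro ⟨σ, hproper, hnormal⟩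
    have hScoe : ∀ z : V, ((SvF G σ z : Finset (Fin 5)) : Set (Fin 5)) = colorsAt G σ z :=
      fun z => Set.Finite.coe_toFinset _
    have hinj : ∀ z : V, Set.InjOn σ (G.incidenceSet z) := by
      intro z e₁ h₁ e₂ h₂ hc
      by_contra hne
      exact hproper e₁ h₁.1 e₂ h₂.1 hne ⟨z, h₁.2, h₂.2⟩ hc
    have h3 : ∀ z : V, (SvF G σ z).card = 3 := by
      intro z
      have hnc : (colorsAt G σ z).ncard = 3 := by
        rw [colorsAt, Set.ncard_image_of_injOn (hinj z)]
        exact ncard_incidenceSet G z (hcubic z)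
      rw [SvF, ← Set.ncard_eq_toFinset_card]
      exact hnc
    have hcc : ∀ z : V, ((SvF G σ z)ᶜ).card = 2 := by
      intro z
      rw [Finset.card_compl, h3 z]
      rfl
    have hmemS : ∀ (z : V) (e : Sym2 V), e ∈ G.incidenceSet z → σ e ∈ SvF G σ z := by
      intro z e he
      rw [SvF, Set.Finite.mem_toFinset]
      exact ⟨e, he, rfl⟩
    have hdich : ∀ u v : V, G.Adj u v →
        SvF G σ u = SvF G σ v ∨ SvF G σ u ∪ SvF G σ v = Finset.univ := by
      intro u v h
      have hn := hnormal u v h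
      rw [← hScoe u, ← hScoe v, ← Finset.coe_union, Set.ncard_coe_finset] at hn
      rcases hn with h3' | h5
      · left
        have e1 : SvF G σ u = SvF G σ u ∪ SvF G σ v :=
          Finset.eq_of_subset_of_card_le Finset.subset_union_left (by rw [h3', h3 u])
        have e2 : SvF G σ v = SvF G σ u ∪ SvF G σ v :=
          Finset.eq_of_subset_of_card_le Finset.subset_union_right (by rw [h3', h3 v])
        rw [e1, ← e2]
      · right
        apply Finset.eq_univ_of_card
        rw [h5]
        rfl
    -- the edge map
    have hA : ∀ e ∈ G.edgeSet, phiOf G σ e ∈ P10.edgeSet := by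
      intro e he
      induction e with
      | h u v =>
        have hadj : G.Adj u v := G.mem_edgeSet.mp he
        have hσu : σ s(u, v) ∈ SvF G σ u :=
          hmemS u _ ((SimpleGraph.mk'_mem_incidenceSet_left_iff G).mpr hadj)
        show Sym2.lift _ s(u, v) ∈ _
        rw [Sym2.lift_mk]
        dsimp only
        by_cases h : SvF G σ u = SvF G σ v
        · rw [if_pos h, SimpleGraph.mem_edgeSet]
          apply P10_adj.mpr
          have hc2 : (SvF G σ u \ {σ s(u, v)}).card = 2 := by
            rw [Finset.card_sdiff_of_subset (Finset.singleton_subset_iff.mpr hσu), h3 u]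
            rfl
          rw [mkK_eq (hcc u), mkK_eq hc2]
          exact disjoint_compl_left.mono_right Finset.sdiff_subset
        · rw [if_neg h, SimpleGraph.mem_edgeSet]
          apply P10_adj.mpr
          rcases hdich u v hadj with h' | h'
          · exact absurd h' h
          rw [mkK_eq (hcc u), mkK_eq (hcc v)]
          rw [Finset.disjoint_left]
          intro a ha hb
          have hau : a ∉ SvF G σ u := Finset.mem_compl.mp ha
          have hav : a ∉ SvF G σ v := Finset.mem_compl.mp hb
      
          have : a ∈ SvF G σ u ∪ SvF G σ v := h' ▸ Finset.mem_univ a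
          rcases Finset.mem_union.mp this with h'' | h''
          · exact hau h''
          · exact hav h''
    refine ⟨phiOf G σ, hA, ?_⟩
    intro v
    refine ⟨mkK ((SvF G σ v)ᶜ), ?_⟩
    ext f
    constructor
    · rintro ⟨e, he, rfl⟩
      obtain ⟨u, hadj, rfl⟩ := exists_rep he
      refine ⟨hA _ (G.mem_edgeSet.mpr hadj), ?_⟩
      show mkK ((SvF G σ v)ᶜ) ∈ Sym2.lift _ s(v, u)
      rw [Sym2.lift_mk]
      dsimp only
      by_cases h : SvF G σ v = SvF G σ u
      · rw [if_pos h]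
        exact Sym2.mem_mk_left _ _
      · rw [if_neg h]
        exact Sym2.mem_mk_left _ _
    · intro hf
      obtain ⟨B, hadjB, rfl⟩ := exists_rep hf
      have hd : Disjoint ((SvF G σ v)ᶜ) B.1 := by
        have := P10_adj.mp hadjB
        rwa [mkK_eq (hcc v)] at this
      have hBsub : B.1 ⊆ SvF G σ v := by
        intro a ha
        by_contra h'
        exact (Finset.disjoint_left.mp hd (Finset.mem_compl.mpr h')) ha
      have hcard1 : (SvF G σ v \ B.1).card = 1 := by
        rw [Finset.card_sdiff_of_subset hBsub, h3 v, B.2]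
      obtain ⟨x, hx⟩ := Finset.card_eq_one.mp hcard1
      have hxmem : x ∈ SvF G σ v \ B.1 := hx ▸ Finset.mem_singleton_self x
      have hxS : x ∈ SvF G σ v := (Finset.mem_sdiff.mp hxmem).1
      have hxB : x ∉ B.1 := (Finset.mem_sdiff.mp hxmem).2
      have hBeq : B.1 = SvF G σ v \ {x} := by
        apply Finset.eq_of_subset_of_card_le
        · intro a ha
          rw [Finset.mem_sdiff, Finset.mem_singleton]
          exact ⟨hBsub ha, fun h => hxB (h ▸ ha)⟩
        · rw [Finset.card_sdiff_of_subset (Finset.singleton_subset_iff.mpr hxS), h3 v, B.2]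
          simp
      have hxcol : x ∈ colorsAt G σ v := by
        rw [← hScoe v]
        exact hxS
      obtain ⟨e, he, hσe⟩ := hxcol
      refine ⟨e, he, ?_⟩
      obtain ⟨u, hadj, rfl⟩ := exists_rep he
      show Sym2.lift _ s(v, u) = _
      rw [Sym2.lift_mk]
      dsimp only
      by_cases h : SvF G σ v = SvF G σ u
      · rw [if_pos h, hσe]
        have : mkK (SvF G σ v \ {x}) = B := by
          apply Subtype.ext
          rw [mkK_eq, hBeq]
          rw [Finset.card_sdiff_of_subset (Finset.singleton_subset_iff.mpr hxS), h3 v]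
          simp
        rw [this]
      · rw [if_neg h]
        rcases hdich v u hadj with h' | h'
        · exact absurd h' h
        have hxSu : x ∈ SvF G σ u := by
          rw [← hσe]
          exact hmemS u _ ((SimpleGraph.mk'_mem_incidenceSet_right_iff G).mpr hadj)
        have hsub : (SvF G σ u)ᶜ ⊆ SvF G σ v \ {x} := by
          intro a ha
          have hau : a ∉ SvF G σ u := Finset.mem_compl.mp ha
          rw [Finset.mem_sdiff, Finset.mem_singleton]
          have : a ∈ SvF G σ v := by
            have := h' ▸ Finset.mem_univ a
            rcases Finset.mem_union.mp this with h'' | h''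
            · exact h''
            · exact absurd h'' hau
          exact ⟨this, fun hh => hau (hh ▸ hxSu)⟩
        have hceq : (SvF G σ u)ᶜ = SvF G σ v \ {x} := by
          apply Finset.eq_of_subset_of_card_le hsub
          rw [Finset.card_sdiff_of_subset (Finset.singleton_subset_iff.mpr hxS), h3 v, hcc u]
          simp
        have : mkK ((SvF G σ u)ᶜ) = B := by
          apply Subtype.ext
          rw [mkK_eq (hcc u), hceq, hBeq]
        rw [this]
end

section
/- Let H be a hypohamiltonian snark and x, y a pair of distinct nonadjacent vertices of H. Then there exists a neighbor x' of x such that H − y has a right-good 2-factor with respect to x that does not contain the edge xx'. (This is the 2-factor criterion showing that the superedge H_{x,y} is j-right for at least one j ∈ {1,2,3}.) -/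
open SimpleGraph

/-- A graph `G` is hypohamiltonian if for every vertex `v`, the graph `G − v`
has a Hamiltonian cycle. -/
def Hypohamiltonian {V : Type*} [DecidableEq V] (G : SimpleGraph V) : Prop :=
  ∀ v : V, ∃ (a : ↥{w : V | w ≠ v}) (c : (SimpleGraph.induce {w : V | w ≠ v} G).Walk a a),
    c.IsHamiltonianCycle

/-- `F` is a 2-factor of `H − y`, viewed as a subgraph of `H` on the full vertex set:
`F ≤ H`, no edge of `F` is incident to `y`, and every vertex other than `y` has degree
exactly `2` in `F`. -/
def IsTwoFactorOfDelete {V : Type*} (H F : SimpleGraph V) (y : V) : Prop :=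
  F ≤ H ∧ (∀ v : V, ¬ F.Adj y v) ∧ ∀ v : V, v ≠ y → (F.neighborSet v).ncard = 2

/-- A 2-factor `F` of `H − y` is right-good with respect to `x` if the component of `F`
containing `x` is a cycle of odd length and every other component of `F` is a cycle of even
length.  (For a 2-regular graph every component is a cycle whose length equals the number
of its vertices.) -/
def RightGood {V : Type*} (F : SimpleGraph V) (x y : V) : Prop :=
  Odd {u : V | F.Reachable u x}.ncard ∧
  ∀ v : V, v ≠ y → ¬ F.Reachable v x → Even {u : V | F.Reachable u v}.ncard


/-!
The Hamiltonian cycle of `H − y`, read in `H`, is a 2-factor of `H − y` with a single component.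
Its length `|V| − 1` is odd because a cubic graph has an even number of vertices, so this 2-factor
is right-good with respect to every `x ≠ y`; and `x` has degree 3 in `H` but only 2 on the cycle,
so the cycle misses one edge `xx'`.
-/

namespace SimpleGraph

variable {V : Type*} {G : SimpleGraph V}

lemma isRegularOfDegree_of_ncard_neighborSet [Fintype V] [DecidableRel G.Adj] {k : ℕ}
    (h : ∀ v, (G.neighborSet v).ncard = k) : G.IsRegularOfDegree k := fun v => by
  rw [← card_neighborSet_eq_degree, Fintype.card_eq_nat_card, Nat.card_coe_set_eq, h]

theorem IsRegularOfDegree.even_card_of_odd [Fintype V] [DecidableRel G.Adj] {k : ℕ}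
    (h : G.IsRegularOfDegree k) (hk : Odd k) : Even (Fintype.card V) := by
  simpa [h.degree_eq, hk] using G.even_card_odd_degree_vertices

lemma exists_adj_not_adj_of_ncard_neighborSet_lt {F : SimpleGraph V} (hle : F ≤ G) {x : V}
    (h : (F.neighborSet x).ncard < (G.neighborSet x).ncard) : ∃ x', G.Adj x x' ∧ ¬F.Adj x x' := by
  have hsub : F.neighborSet x ⊆ G.neighborSet x := fun _ hw => hle hw
  have hssub : F.neighborSet x ⊂ G.neighborSet x :=
    hsub.ssubset_of_ne fun heq => h.ne (congrArg Set.ncard heq)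
  exact Set.exists_of_ssubset hssub

lemma Subgraph.Connected.reachable_spanningCoe {H : G.Subgraph} (hc : H.Connected) {u v : V}
    (hu : u ∈ H.verts) (hv : v ∈ H.verts) : H.spanningCoe.Reachable u v :=
  (hc ⟨u, hu⟩ ⟨v, hv⟩).map ⟨Subtype.val, id⟩

lemma Walk.reachable_spanningCoe_toSubgraph_iff {u x : V} (c : G.Walk u u) (hx : x ∈ c.support)
    (w : V) : c.toSubgraph.spanningCoe.Reachable w x ↔ w ∈ c.support := by
  refine ⟨fun ⟨p⟩ => ?_, fun hw => c.toSubgraph_connected.reachable_spanningCoe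
    (c.mem_verts_toSubgraph.2 hw) (c.mem_verts_toSubgraph.2 hx)⟩
  cases p with
  | nil => exact hx
  | cons hadj _ => exact c.mem_verts_toSubgraph.1 (Subgraph.Adj.fst_mem hadj)

lemma Walk.IsCycle.isTwoFactorOfDelete {u y : V} {c : G.Walk u u} (hc : c.IsCycle)
    (hsupp : ∀ v, v ∈ c.support ↔ v ≠ y) : IsTwoFactorOfDelete G c.toSubgraph.spanningCoe y :=
  ⟨c.toSubgraph.spanningCoe_le,
    fun _ hadj => (hsupp y).1 (c.mem_verts_toSubgraph.1 (Subgraph.Adj.fst_mem hadj)) rfl,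
    fun _ hv => hc.ncard_neighborSet_toSubgraph_eq_two ((hsupp _).2 hv)⟩

lemma rightGood_of_reachable_iff {F : SimpleGraph V} {x y : V}
    (hreach : ∀ w, F.Reachable w x ↔ w ≠ y) (hodd : Odd ({y}ᶜ : Set V).ncard) :
    RightGood F x y := by
  refine ⟨?_, fun v hv hnr => absurd ((hreach v).2 hv) hnr⟩
  convert hodd using 2
  ext w
  exact hreach w

lemma Hypohamiltonian.exists_isCycle_mem_support_iff [DecidableEq V] (h : Hypohamiltonian G)
    (y : V) : ∃ (u : V) (c : G.Walk u u), c.IsCycle ∧ ∀ v, v ∈ c.support ↔ v ≠ y := by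
  obtain ⟨a, c, hc⟩ := h y
  let f := Embedding.induce {w : V | w ≠ y} (G := G)
  refine ⟨_, c.map f.toHom, hc.isCycle.map f.injective, fun v => ?_⟩
  simp only [Walk.support_map, List.mem_map]
  exact ⟨fun ⟨w, _, hw⟩ => hw ▸ w.2, fun hv => ⟨⟨v, hv⟩, hc.mem_support _, rfl⟩⟩

end SimpleGraph

theorem hypohamiltonian_snark_exists_rightGood_two_factor_general
    {V : Type*} [Fintype V] [DecidableEq V] (H : SimpleGraph V)
    (hcubic : ∀ v : V, (H.neighborSet v).ncard = 3)
    (hhypo : Hypohamiltonian H)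
    (x y : V) (hxy : x ≠ y) :
    ∃ x' : V, H.Adj x x' ∧
      ∃ F : SimpleGraph V, IsTwoFactorOfDelete H F y ∧ RightGood F x y ∧ ¬ F.Adj x x' := by
  classical
  obtain ⟨_, c, hc, hsupp⟩ := hhypo.exists_isCycle_mem_support_iff y
  have hF := hc.isTwoFactorOfDelete hsupp
  have hodd : Odd ({y}ᶜ : Set V).ncard := by
    have heven := (isRegularOfDegree_of_ncard_neighborSet hcubic).even_card_of_odd (by decide)
    rw [Set.ncard_compl, Set.ncard_singleton, Nat.card_eq_fintype_card]
    exact Nat.Even.sub_odd (Fintype.card_pos_iff.2 ⟨x⟩) heven odd_one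
  have hgood : RightGood c.toSubgraph.spanningCoe x y := rightGood_of_reachable_iff
    (fun w => (c.reachable_spanningCoe_toSubgraph_iff ((hsupp x).2 hxy) w).trans (hsupp w)) hodd
  obtain ⟨x', hadj, hnotF⟩ := exists_adj_not_adj_of_ncard_neighborSet_lt hF.1
    (by rw [hF.2.2 x hxy, hcubic x]; norm_num)
  exact ⟨x', hadj, _, hF, hgood, hnotF⟩

/-- Let `H` be a hypohamiltonian snark and `x, y` a pair of distinct nonadjacent vertices of
`H`.  Then there exists a neighbor `x'` of `x` such that `H − y` has a right-good 2-factor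
with respect to `x` not containing the edge `xx'`. -/
theorem hypohamiltonian_snark_exists_rightGood_two_factor
    {V : Type*} [Fintype V] [DecidableEq V] (H : SimpleGraph V)
    (hcubic : ∀ v : V, (H.neighborSet v).ncard = 3)
    (hconn : H.Connected)
    (hbridgeless : ∀ e ∈ H.edgeSet, ¬ H.IsBridge e)
    (hnot3 : ¬ ∃ τ : Sym2 V → Fin 3, ProperEdgeColoring H τ)
    (hhypo : Hypohamiltonian H)
    (x y : V) (hxy : x ≠ y) (hnadj : ¬ H.Adj x y) :
    ∃ x' : V, H.Adj x x' ∧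
      ∃ F : SimpleGraph V, IsTwoFactorOfDelete H F y ∧ RightGood F x y ∧ ¬ F.Adj x x' :=
  hypohamiltonian_snark_exists_rightGood_two_factor_general H hcubic hhypo x y hxy
end

section
/- Let H be a cubic graph, x and y distinct nonadjacent vertices of H, x' a neighbor of x, and F a right-good 2-factor of H − y with respect to x that does not contain the edge xx'. Then there exists a map σ: E(H) → {1, 2, 3} such that: the three edges incident to y and the edge xx' all receive color 3; the two edges incident to x other than xx' both receive color 2; and every vertex u ∉ {x, y} is incident to exactly one edge of each of the colors 1, 2, 3. (The restriction of such a σ to the superedge H_{x,y} is a right coloring of H_{x,y}.) -/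
open SimpleGraph



namespace RGAux

variable {V : Type*}

def pairIdx (i : ℕ) : ℕ := if i % 2 = 0 then i + 1 else i - 1

lemma pairIdx_lt {i n : ℕ} (hn : Even n) (h : i < n) : pairIdx i < n := by
  obtain ⟨k, rfl⟩ := hn; unfold pairIdx; split <;> omega

lemma pairIdx_ne (i : ℕ) : pairIdx i ≠ i := by unfold pairIdx; split <;> omega

lemma pairIdx_invol (i : ℕ) : pairIdx (pairIdx i) = i := by
  unfold pairIdx; split <;> split <;> omega

lemma pairIdx_adj (i : ℕ) : pairIdx i = i + 1 ∨ i = pairIdx i + 1 := by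
  unfold pairIdx; split <;> omega

variable [DecidableEq V]

def pairMap (l : List V) (u : V) : V :=
  if h : u ∈ l then l.getD (pairIdx (l.idxOf u)) u else u

lemma pairMap_of_not_mem {l : List V} {u : V} (h : u ∉ l) : pairMap l u = u := dif_neg h

lemma pairMap_eq_getElem {l : List V} {u : V} (hu : u ∈ l) (hlen : Even l.length) :
    ∃ h : pairIdx (l.idxOf u) < l.length, pairMap l u = l[pairIdx (l.idxOf u)] := by
  have hi : l.idxOf u < l.length := List.idxOf_lt_length_iff.2 hu
  have hj := pairIdx_lt hlen hi
  exact ⟨hj, by rw [pairMap, dif_pos hu, List.getD_eq_getElem _ _ hj]⟩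

lemma pairMap_mem {l : List V} {u : V} (hu : u ∈ l) (hlen : Even l.length) :
    pairMap l u ∈ l := by
  obtain ⟨h, e⟩ := pairMap_eq_getElem hu hlen
  rw [e]; exact List.getElem_mem _

lemma pairMap_ne {l : List V} (hl : l.Nodup) {u : V} (hu : u ∈ l) (hlen : Even l.length) :
    pairMap l u ≠ u := by
  obtain ⟨h, e⟩ := pairMap_eq_getElem hu hlen
  have hi : l.idxOf u < l.length := List.idxOf_lt_length_iff.2 hu
  intro heq
  have : l[pairIdx (l.idxOf u)] = l[l.idxOf u] := by
    rw [← e, heq, List.getElem_idxOf hi]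
  exact pairIdx_ne _ ((List.Nodup.getElem_inj_iff hl).1 this)

lemma pairMap_pairMap {l : List V} (hl : l.Nodup) {u : V} (hu : u ∈ l) (hlen : Even l.length) :
    pairMap l (pairMap l u) = u := by
  obtain ⟨h, e⟩ := pairMap_eq_getElem hu hlen
  have hi : l.idxOf u < l.length := List.idxOf_lt_length_iff.2 hu
  have hmem : pairMap l u ∈ l := pairMap_mem hu hlen
  have hidx : l.idxOf (pairMap l u) = pairIdx (l.idxOf u) := by
    rw [e]; exact hl.idxOf_getElem _ _
  rw [pairMap, dif_pos hmem, hidx, pairIdx_invol, List.getD_eq_getElem _ _ hi,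
    List.getElem_idxOf hi]

lemma pairMap_rel {l : List V} {R : V → V → Prop} (hsym : Symmetric R)
    (hchain : l.Chain' R) {u : V} (hu : u ∈ l) (hlen : Even l.length) :
    R u (pairMap l u) := by
  obtain ⟨h, e⟩ := pairMap_eq_getElem hu hlen
  have hi : l.idxOf u < l.length := List.idxOf_lt_length_iff.2 hu
  have hget := List.isChain_iff_getElem.1 hchain
  have hDu : l.getD (l.idxOf u) u = u := by
    rw [List.getD_eq_getElem _ _ hi, List.getElem_idxOf hi]
  have hpm : pairMap l u = l.getD (pairIdx (l.idxOf u)) u := by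
    rw [pairMap, dif_pos hu]
  rcases pairIdx_adj (l.idxOf u) with hadj | hadj
  · have h' : l.idxOf u < l.length - 1 := by omega
    have hD : R (l.getD (l.idxOf u) u) (l.getD (l.idxOf u + 1) u) := by
      have := hget (l.idxOf u) (by omega)
      rw [List.getD_eq_getElem _ _ hi, List.getD_eq_getElem _ _ (by omega)]
      exact this
    rw [← hadj] at hD
    rw [hpm]
    rwa [hDu] at hD
  · have h' : pairIdx (l.idxOf u) < l.length - 1 := by omega
    have hD : R (l.getD (pairIdx (l.idxOf u)) u)
        (l.getD (pairIdx (l.idxOf u) + 1) u) := by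
      have := hget (pairIdx (l.idxOf u)) (by omega)
      rw [List.getD_eq_getElem _ _ (by omega), List.getD_eq_getElem _ _ (by omega)]
      exact this
    rw [← hadj, hDu] at hD
    rw [hpm]
    exact hsym hD

end RGAux



namespace RGAux2

variable {V : Type*} [DecidableEq V] {G : SimpleGraph V}

lemma start_edge_eq {w b v a : V} (h : G.Adj w b) (q : G.Walk b v)
    (hp : (Walk.cons h q).IsPath) (ha : s(a, w) ∈ (Walk.cons h q).edges) : a = b := by
  rw [Walk.edges_cons] at ha
  rcases List.mem_cons.1 ha with h1 | h1
  · rw [Sym2.eq_iff] at h1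
    rcases h1 with ⟨rfl, rfl⟩ | ⟨rfl, -⟩
    · exact absurd rfl h.ne
    · rfl
  · exact absurd (q.snd_mem_support_of_mem_edges h1) ((Walk.cons_isPath_iff h q).1 hp).2

lemma exists_cycle_aux [Fintype V] {v : V}
    (h2 : ∀ u, G.Reachable u v → (G.neighborSet u).ncard = 2) :
    ∀ (n : ℕ) (w : V) (p : G.Walk w v), p.IsPath → 1 ≤ p.length →
      Fintype.card V ≤ p.length + n → ∃ c : G.Walk v v, c.IsCycle := by
  intro n
  induction n with
  | zero =>
    intro w p hp _ hcard
    have := hp.length_lt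
    omega
  | succ n ih =>
    intro w p hp h1 hcard
    have hwv : w ≠ v := by
      rintro rfl
      rw [Walk.isPath_iff_eq_nil] at hp
      simp [hp] at h1
    obtain ⟨b, hwb, q, rfl⟩ := Walk.exists_eq_cons_of_ne hwv p
    have hS := h2 w (Walk.cons hwb q).reachable
    obtain ⟨a1, a2, hne, hSeq⟩ := Set.ncard_eq_two.1 hS
    have hbS : b ∈ G.neighborSet w := hwb
    set z : V := if b = a1 then a2 else a1 with hzdef
    have hzS : z ∈ G.neighborSet w := by
      rw [hSeq]; rw [hzdef]; split <;> simp
    have hzb : z ≠ b := by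
      rw [hSeq] at hbS
      rw [hzdef]
      simp only [Set.mem_insert_iff, Set.mem_singleton_iff] at hbS
      rcases hbS with hb | hb
      · rw [if_pos hb, hb]; exact Ne.symm hne
      · rw [if_neg (by rw [hb]; exact Ne.symm hne), hb]; exact hne
    have hwz : G.Adj w z := hzS
    by_cases hzmem : z ∈ (Walk.cons hwb q).support
    · -- close the cycle: show z = v
      set P : G.Walk w v := Walk.cons hwb q with hP
      have hzv : z = v := by
        by_contra hzv
        have hzw : z ≠ w := hwz.ne'
        have hspec := P.take_spec hzmem
        have hedges : P.edges = (P.takeUntil z hzmem).edges ++ (P.dropUntil z hzmem).edges := by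
          conv_lhs => rw [← hspec]
          rw [Walk.edges_append]
        obtain ⟨pr, hzpr, t', ht'⟩ := Walk.exists_eq_cons_of_ne hzw (P.takeUntil z hzmem).reverse
        have hepr : s(z, pr) ∈ (P.takeUntil z hzmem).edges := by
          rw [← List.mem_reverse, ← Walk.edges_reverse, ht', Walk.edges_cons]
          exact List.mem_cons_self
        obtain ⟨sc, hzsc, d', hd'⟩ := Walk.exists_eq_cons_of_ne hzv (P.dropUntil z hzmem)
        have hesc : s(z, sc) ∈ (P.dropUntil z hzmem).edges := by
          rw [hd', Walk.edges_cons]; exact List.mem_cons_self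
        have hnd : P.edges.Nodup := hp.isTrail.edges_nodup
        rw [hedges] at hnd
        have hdisj := List.disjoint_of_nodup_append hnd
        have hprsc : pr ≠ sc := by
          rintro rfl
          exact hdisj hepr hesc
        have heprP : s(z, pr) ∈ P.edges := by rw [hedges]; exact List.mem_append_left _ hepr
        have hescP : s(z, sc) ∈ P.edges := by rw [hedges]; exact List.mem_append_right _ hesc
        have hwpr : w ≠ pr := by
          rintro rfl
          exact hzb (start_edge_eq hwb q hp heprP)
        have hwsc : w ≠ sc := by
          rintro rfl
          exact hzb (start_edge_eq hwb q hp hescP)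
        have hsub : ({pr, sc, w} : Set V) ⊆ G.neighborSet z := by
          rintro t (rfl | rfl | rfl)
          · exact hzpr
          · exact hzsc
          · exact hwz.symm
        have h3 : ({pr, sc, w} : Set V).ncard = 3 :=
          Set.ncard_eq_three.2 ⟨pr, sc, w, hprsc, Ne.symm hwpr, Ne.symm hwsc, rfl⟩
        have hle := Set.ncard_le_ncard hsub (Set.toFinite _)
        have h2z := h2 z (P.dropUntil z hzmem).reachable
        omega
      have hwv' : G.Adj w v := hzv ▸ hwz
      refine ⟨Walk.cons hwv'.symm P, ?_⟩
      rw [Walk.cons_isCycle_iff]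
      refine ⟨hp, fun hmem => ?_⟩
      have : v = b := start_edge_eq hwb q hp hmem
      exact hzb (hzv.trans this)
    · -- extend the path
      have hp' : (Walk.cons hwz.symm (Walk.cons hwb q)).IsPath :=
        (Walk.cons_isPath_iff _ _).2 ⟨hp, hzmem⟩
      refine ih z _ hp' (by simp) ?_
      simp only [Walk.length_cons] at hcard ⊢
      omega

lemma rotate_support_subset {v a : V} (c : G.Walk v v) (ha : a ∈ c.support) {u : V}
    (hu : u ∈ (c.rotate _ ha).support) : u ∈ c.support := by
  rw [Walk.support_eq_cons (c.rotate _ ha)] at hu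
  rcases List.mem_cons.1 hu with rfl | hu
  · exact ha
  · exact List.mem_of_mem_tail (((Walk.support_rotate c _ ha).perm.mem_iff).1 hu)

lemma cycle_support_closed {v : V} (c : G.Walk v v) (hc : c.IsCycle)
    (h2 : ∀ u, G.Reachable u v → (G.neighborSet u).ncard = 2) :
    ∀ u, G.Reachable u v → u ∈ c.support := by
  have hstep : ∀ a, a ∈ c.support → ∀ b, G.Adj a b → b ∈ c.support := by
    intro a ha b hab
    have hra : G.Reachable a v := (c.takeUntil a ha).reachable.symm
    have hc' := hc.rotate ha
    obtain ⟨b0, h0, q, hq⟩ := Walk.not_nil_iff.1 hc'.not_nil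
    have hab0 : a ≠ b0 := h0.ne
    obtain ⟨w0, h1, r, hr⟩ := Walk.exists_eq_cons_of_ne hab0 q.reverse
    have he1 : s(a, w0) ∈ q.edges := by
      rw [← List.mem_reverse, ← Walk.edges_reverse, hr, Walk.edges_cons]
      exact List.mem_cons_self
    have hnd : (Walk.cons h0 q).edges.Nodup := by
      rw [← hq]; exact hc'.isTrail.edges_nodup
    rw [Walk.edges_cons, List.nodup_cons] at hnd
    have hb0w0 : b0 ≠ w0 := by
      rintro rfl
      exact hnd.1 he1
    have hsub : ({b0, w0} : Set V) ⊆ G.neighborSet a := by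
      rintro t (rfl | rfl)
      · exact h0
      · exact q.adj_of_mem_edges he1
    have heq : G.neighborSet a = {b0, w0} := by
      refine (Set.eq_of_subset_of_ncard_le hsub ?_
        (Set.finite_of_ncard_ne_zero (by rw [h2 a hra]; norm_num))).symm
      rw [h2 a hra, Set.ncard_pair hb0w0]
    have hb0mem : b0 ∈ (c.rotate _ ha).support := by
      rw [hq, Walk.support_cons]
      exact List.mem_cons_of_mem _ q.start_mem_support
    have hw0mem : w0 ∈ (c.rotate _ ha).support := by
      rw [hq, Walk.support_cons]
      exact List.mem_cons_of_mem _ (q.snd_mem_support_of_mem_edges he1)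
    have hbmem : b ∈ G.neighborSet a := hab
    rw [heq] at hbmem
    rcases hbmem with rfl | rfl
    · exact rotate_support_subset c ha hb0mem
    · exact rotate_support_subset c ha hw0mem
  have hwalk : ∀ {a b : V} (_ : G.Walk a b), a ∈ c.support → b ∈ c.support := by
    intro a b p
    induction p with
    | nil => exact id
    | cons h q ih => intro ha; exact ih (hstep _ ha _ h)
  intro u hu
  obtain ⟨p⟩ := hu.symm
  exact hwalk p c.start_mem_support

lemma cycle_tail_length {v u : V} (c : G.Walk v u) : c.support.tail.length = c.length := by
  have hlen : c.support.length = c.length + 1 := c.length_support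
  rw [Walk.support_eq_cons c] at hlen
  simpa using hlen

lemma cycle_tail_ne_nil {v : V} {c : G.Walk v v} (hc : c.IsCycle) : c.support.tail ≠ [] := by
  have h3 := hc.three_le_length
  have hl := cycle_tail_length c
  intro h
  rw [h] at hl
  simp at hl
  omega

lemma cycle_tail_getLast? {v : V} {c : G.Walk v v} (hc : c.IsCycle) :
    c.support.tail.getLast? = some v := by
  have h1 : c.support.getLast? = some v := by
    rw [List.getLast?_eq_getLast_of_ne_nil c.support_ne_nil]
    exact congrArg some c.getLast_support
  obtain ⟨t0, ts, ht⟩ := List.exists_cons_of_ne_nil (cycle_tail_ne_nil hc)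
  rw [Walk.support_eq_cons c, ht, List.getLast?_cons_cons] at h1
  rw [ht]
  exact h1

lemma cycle_start_mem_tail {v : V} {c : G.Walk v v} (hc : c.IsCycle) :
    v ∈ c.support.tail := by
  obtain ⟨h, he⟩ := List.mem_getLast?_eq_getLast (by rw [cycle_tail_getLast? hc]; rfl)
  have := List.getLast_mem h
  rwa [← he] at this

lemma cycle_tail_dropLast_append {v : V} {c : G.Walk v v} (hc : c.IsCycle) :
    c.support.tail.dropLast ++ [v] = c.support.tail :=
  List.dropLast_append_getLast? _ (by rw [cycle_tail_getLast? hc]; rfl)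

lemma cycle_support_ncard {v : V} {c : G.Walk v v} (hc : c.IsCycle) :
    {u | u ∈ c.support}.ncard = c.length := by
  have h1 : {u | u ∈ c.support} = (c.support.toFinset : Set V) := by
    ext u; simp
  rw [h1, Set.ncard_coe_finset]
  have h2 : c.support.toFinset = c.support.tail.toFinset := by
    conv_lhs => rw [Walk.support_eq_cons c]
    rw [List.toFinset_cons, Finset.insert_eq_self.2 (List.mem_toFinset.2 (cycle_start_mem_tail hc))]
  rw [h2, List.toFinset_card_of_nodup hc.support_nodup, cycle_tail_length]

lemma exists_cycle_thru [Fintype V] {v : V}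
    (h2 : ∀ u, G.Reachable u v → (G.neighborSet u).ncard = 2) :
    ∃ c : G.Walk v v, c.IsCycle ∧ ∀ u, G.Reachable u v → u ∈ c.support := by
  have hv := h2 v (Reachable.refl v)
  obtain ⟨a1, a2, hne, hSeq⟩ := Set.ncard_eq_two.1 hv
  have ha1 : G.Adj v a1 := by rw [← SimpleGraph.mem_neighborSet, hSeq]; simp
  have hp0 : (Walk.cons ha1.symm Walk.nil : G.Walk a1 v).IsPath := by
    simp [Walk.cons_isPath_iff, ha1.ne']
  obtain ⟨c, hc⟩ := exists_cycle_aux h2 (Fintype.card V) a1 _ hp0 (by simp) (by simp)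
  exact ⟨c, hc, cycle_support_closed c hc h2⟩

end RGAux2

namespace Spec

variable {V : Type*} [DecidableEq V] [Fintype V]

lemma exists_spec_list {F : SimpleGraph V} {x y : V}
    (hxy : x ≠ y)
    (hdeg : ∀ v : V, v ≠ y → (F.neighborSet v).ncard = 2)
    (hy : ∀ v : V, ¬F.Adj y v)
    (hodd : Odd {u : V | F.Reachable u x}.ncard)
    (heven : ∀ v : V, v ≠ y → ¬F.Reachable v x → Even {u : V | F.Reachable u v}.ncard)
    (c : F.ConnectedComponent) :
    ∃ l : List V, l.Nodup ∧ Even l.length ∧ l.Chain' F.Adj ∧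
      ∀ u : V, u ∈ l ↔ (F.connectedComponentMk u = c ∧ u ≠ x ∧ u ≠ y) := by
  have hyiso : ∀ u : V, F.Reachable y u → u = y := by
    intro u h
    obtain ⟨p⟩ := h
    cases p with
    | nil => rfl
    | cons h q => exact absurd h (hy _)
  by_cases hcy : c = F.connectedComponentMk y
  · refine ⟨[], List.nodup_nil, by simp, List.isChain_nil, fun u => ?_⟩
    constructor
    · intro h; exact absurd h (List.not_mem_nil)
    · rintro ⟨hc, -, huy⟩
      rw [hcy] at hc
      exact (huy (hyiso u (ConnectedComponent.eq.1 hc).symm)).elim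
  · by_cases hcx : c = F.connectedComponentMk x
    · -- odd component through x
      have h2 : ∀ u, F.Reachable u x → (F.neighborSet u).ncard = 2 := by
        intro u hu
        refine hdeg u ?_
        rintro rfl
        exact hxy (hyiso x hu)
      obtain ⟨cw, hcw, hcov⟩ := RGAux2.exists_cycle_thru h2
      have hset : {u : V | F.Reachable u x} = {u : V | u ∈ cw.support} := by
        ext u
        exact ⟨fun h => hcov u h, fun h => (cw.takeUntil u h).reachable.symm⟩
      have hoddlen : Odd cw.length := by
        rw [← RGAux2.cycle_support_ncard hcw, ← hset]
        exact hodd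
      have hnd : cw.support.tail.Nodup := hcw.support_nodup
      have happ : cw.support.tail.dropLast ++ [x] = cw.support.tail :=
        RGAux2.cycle_tail_dropLast_append hcw
      have hnd2 : (cw.support.tail.dropLast ++ [x]).Nodup := by rw [happ]; exact hnd
      have hxmem : x ∉ cw.support.tail.dropLast := fun hx =>
        (List.disjoint_of_nodup_append hnd2) hx (List.mem_singleton.2 rfl)
      refine ⟨cw.support.tail.dropLast, hnd.sublist (List.dropLast_sublist _), ?_, ?_, ?_⟩
      · rw [List.length_dropLast, RGAux2.cycle_tail_length]
        exact Nat.Odd.sub_odd hoddlen odd_one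
      · exact ((cw.isChain_adj_support).tail).prefix (List.dropLast_prefix _)
      · intro u
        constructor
        · intro hu
          have hutl : u ∈ cw.support.tail := (List.dropLast_sublist _).subset hu
          have husup : u ∈ cw.support := List.mem_of_mem_tail hutl
          have hreach : F.Reachable u x := (cw.takeUntil u husup).reachable.symm
          refine ⟨by rw [hcx]; exact ConnectedComponent.eq.2 hreach, ?_, ?_⟩
          · rintro rfl; exact hxmem hu
          · rintro rfl; exact hxy (hyiso x hreach)
        · rintro ⟨hc, hux, -⟩
          rw [hcx] at hc
          have hreach : F.Reachable u x := ConnectedComponent.eq.1 hc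
          have husup : u ∈ cw.support := hcov u hreach
          rw [Walk.support_eq_cons cw] at husup
          rcases List.mem_cons.1 husup with rfl | hutl
          · exact absurd rfl hux
          · rw [← happ] at hutl
            rcases List.mem_append.1 hutl with h | h
            · exact h
            · exact absurd (List.mem_singleton.1 h) hux
    · -- even component
      obtain ⟨v, hv⟩ := c.exists_rep
      subst hv
      have hvy : v ≠ y := by rintro rfl; exact hcy rfl
      have hvx : ¬F.Reachable v x := fun h => hcx (ConnectedComponent.eq.2 h)
      have h2 : ∀ u, F.Reachable u v → (F.neighborSet u).ncard = 2 := by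
        intro u hu
        refine hdeg u ?_
        rintro rfl
        exact hvy (hyiso v hu)
      obtain ⟨cw, hcw, hcov⟩ := RGAux2.exists_cycle_thru h2
      have hset : {u : V | F.Reachable u v} = {u : V | u ∈ cw.support} := by
        ext u
        exact ⟨fun h => hcov u h, fun h => (cw.takeUntil u h).reachable.symm⟩
      have hevenlen : Even cw.length := by
        rw [← RGAux2.cycle_support_ncard hcw, ← hset]
        exact heven v hvy hvx
      have hnd : cw.support.tail.Nodup := hcw.support_nodup
      have happ : cw.support.tail.dropLast ++ [v] = cw.support.tail :=
        RGAux2.cycle_tail_dropLast_append hcw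
      have hnd2 : (cw.support.tail.dropLast ++ [v]).Nodup := by rw [happ]; exact hnd
      have hvmem : v ∉ cw.support.tail.dropLast := fun hx =>
        (List.disjoint_of_nodup_append hnd2) hx (List.mem_singleton.2 rfl)
      have hlen2 : cw.support.tail.dropLast.length + 1 = cw.support.tail.length := by
        conv_rhs => rw [← happ]
        simp
      refine ⟨v :: cw.support.tail.dropLast,
        List.nodup_cons.2 ⟨hvmem, hnd.sublist (List.dropLast_sublist _)⟩, ?_, ?_, ?_⟩
      · rw [List.length_cons, hlen2, RGAux2.cycle_tail_length]
        exact hevenlen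
      · obtain ⟨t, ht⟩ := List.dropLast_prefix cw.support.tail
        refine (cw.isChain_adj_support).prefix ⟨t, ?_⟩
        rw [List.cons_append, ht, ← Walk.support_eq_cons]
      · intro u
        have husupport : ∀ w, w ∈ cw.support → F.Reachable w v := fun w hw =>
          (cw.takeUntil w hw).reachable.symm
        constructor
        · intro hu
          have hreach : F.Reachable u v := by
            rcases List.mem_cons.1 hu with rfl | hu'
            · exact Reachable.refl _
            · exact husupport u (List.mem_of_mem_tail ((List.dropLast_sublist _).subset hu'))
          refine ⟨ConnectedComponent.eq.2 hreach, ?_, ?_⟩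
          · rintro rfl; exact hvx hreach.symm
          · rintro rfl; exact hvy (hyiso v hreach)
        · rintro ⟨hc, -, -⟩
          have hreach : F.Reachable u v := ConnectedComponent.eq.1 hc
          have husup : u ∈ cw.support := hcov u hreach
          rw [Walk.support_eq_cons cw] at husup
          rcases List.mem_cons.1 husup with rfl | hutl
          · exact List.mem_cons_self
          · rw [← happ] at hutl
            rcases List.mem_append.1 hutl with h | h
            · exact List.mem_cons_of_mem _ h
            · rw [List.mem_singleton.1 h]
              exact List.mem_cons_self

end Spec


/-- Let `H` be a cubic graph, `x, y` distinct nonadjacent vertices, `x'` a neighbor of `x`,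
and `F` a right-good 2-factor of `H − y` with respect to `x` not containing the edge `xx'`.
Then there is a map `σ : E(H) → {1, 2, 3}` (colors encoded as `Fin 3`, with `0 ↦ 1`,
`1 ↦ 2`, `2 ↦ 3`) such that the three edges incident to `y` and the edge `xx'` receive
color `3`, the two other edges incident to `x` receive color `2`, and every vertex
`u ∉ {x, y}` is incident to exactly one edge of each of the three colors. -/
theorem rightGood_two_factor_yields_right_coloring
    {V : Type*} [Fintype V] (H : SimpleGraph V)
    (hcubic : ∀ v : V, (H.neighborSet v).ncard = 3)
    (x y x' : V) (hxy : x ≠ y) (hnadj : ¬ H.Adj x y) (hx' : H.Adj x x')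
    (F : SimpleGraph V) (hF : IsTwoFactorOfDelete H F y)
    (hrg : RightGood F x y) (havoid : ¬ F.Adj x x') :
    ∃ σ : Sym2 V → Fin 3,
      (∀ e ∈ H.edgeSet, y ∈ e → σ e = 2) ∧
      σ s(x, x') = 2 ∧
      (∀ e ∈ H.edgeSet, x ∈ e → e ≠ s(x, x') → σ e = 1) ∧
      ∀ u : V, u ≠ x → u ≠ y → ∀ c : Fin 3,
        ∃! e : Sym2 V, e ∈ H.edgeSet ∧ u ∈ e ∧ σ e = c := by
  classical
  obtain ⟨hle, hyadj, hdeg⟩ := hF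
  obtain ⟨hodd, heven⟩ := hrg
  have spec := fun c => Spec.exists_spec_list hxy hdeg hyadj hodd heven c
  choose L hL1 hL2 hL3 hL4 using spec
  set m : V → V := fun u => RGAux.pairMap (L (F.connectedComponentMk u)) u with hm
  have hmemL : ∀ u : V, u ≠ x → u ≠ y → u ∈ L (F.connectedComponentMk u) := fun u hux huy =>
    (hL4 _ u).2 ⟨rfl, hux, huy⟩
  have hmadj : ∀ u : V, u ≠ x → u ≠ y → F.Adj u (m u) := fun u hux huy =>
    RGAux.pairMap_rel (fun a b h => h.symm) (hL3 _) (hmemL u hux huy) (hL2 _)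
  have hmprops : ∀ u : V, u ≠ x → u ≠ y → (m u ≠ x ∧ m u ≠ y ∧ m u ≠ u ∧ m (m u) = u) := by
    intro u hux huy
    have hmem := hmemL u hux huy
    have hmm : m u ∈ L (F.connectedComponentMk u) := RGAux.pairMap_mem hmem (hL2 _)
    obtain ⟨hc, hmux, hmuy⟩ := (hL4 _ (m u)).1 hmm
    refine ⟨hmux, hmuy, RGAux.pairMap_ne (hL1 _) hmem (hL2 _), ?_⟩
    show RGAux.pairMap (L (F.connectedComponentMk (m u))) (m u) = u
    rw [hc]
    exact RGAux.pairMap_pairMap (hL1 _) hmem (hL2 _)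
  set σ : Sym2 V → Fin 3 := fun e =>
    if e ∈ F.edgeSet then (if ∃ u, u ≠ x ∧ u ≠ y ∧ e = s(u, m u) then 0 else 1) else 2 with hσ
  have hσ2 : ∀ e, e ∉ F.edgeSet → σ e = 2 := fun e h => by
    simp only [hσ]; rw [if_neg h]
  have hσ0 : ∀ e, e ∈ F.edgeSet → (∃ a, a ≠ x ∧ a ≠ y ∧ e = s(a, m a)) → σ e = 0 :=
    fun e h1 h2 => by simp only [hσ]; rw [if_pos h1, if_pos h2]
  have hσ1 : ∀ e, e ∈ F.edgeSet → ¬(∃ a, a ≠ x ∧ a ≠ y ∧ e = s(a, m a)) → σ e = 1 :=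
    fun e h1 h2 => by simp only [hσ]; rw [if_pos h1, if_neg h2]
  -- x's F-neighborhood
  have hsubx : F.neighborSet x ⊆ H.neighborSet x \ {x'} := fun w hw =>
    ⟨hle hw, fun h => havoid (by rw [Set.mem_singleton_iff] at h; rwa [h] at hw)⟩
  have hcardx : (H.neighborSet x \ {x'}).ncard = 2 := by
    rw [Set.ncard_sdiff_singleton_of_mem (show x' ∈ H.neighborSet x from hx'), hcubic x]
  have hFx : F.neighborSet x = H.neighborSet x \ {x'} :=
    Set.eq_of_subset_of_ncard_le hsubx (by rw [hcardx, hdeg x hxy]) (Set.toFinite _)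
  refine ⟨σ, ?_, ?_, ?_, ?_⟩
  · -- edges at y
    intro e he hye
    obtain ⟨b, rfl⟩ := Sym2.mem_iff_exists.1 hye
    have hnF : s(y, b) ∉ F.edgeSet := fun h => hyadj b (F.mem_edgeSet.1 h)
    exact hσ2 _ hnF
  · -- edge x x'
    have hnF : s(x, x') ∉ F.edgeSet := fun h => havoid (F.mem_edgeSet.1 h)
    exact hσ2 _ hnF
  · -- other edges at x
    intro e he hxe hne
    obtain ⟨w, rfl⟩ := Sym2.mem_iff_exists.1 hxe
    have hadj : H.Adj x w := H.mem_edgeSet.1 he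
    have hwx' : w ≠ x' := fun h => hne (by rw [h])
    have hFadj : F.Adj x w := by
      have : w ∈ F.neighborSet x := by rw [hFx]; exact ⟨hadj, hwx'⟩
      exact this
    have hnomatch : ¬∃ u, u ≠ x ∧ u ≠ y ∧ s(x, w) = s(u, m u) := by
      rintro ⟨u, hux, huy, hequ⟩
      rw [Sym2.eq_iff] at hequ
      obtain ⟨hm1, hm2, hm3, hm4⟩ := hmprops u hux huy
      rcases hequ with ⟨h1, -⟩ | ⟨h1, -⟩
      · exact hux h1.symm
      · exact hm1 h1.symm
    exact hσ1 _ (F.mem_edgeSet.2 hFadj) hnomatch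
  · -- vertices other than x, y
    intro u hux huy c
    obtain ⟨hm1, hm2, hm3, hm4⟩ := hmprops u hux huy
    have hmadju : F.Adj u (m u) := hmadj u hux huy
    have hHFsub : F.neighborSet u ⊆ H.neighborSet u := fun w hw => hle hw
    have hDcard : (H.neighborSet u \ F.neighborSet u).ncard = 1 := by
      rw [Set.ncard_diff hHFsub (Set.toFinite _), hcubic u, hdeg u huy]
    obtain ⟨z, hz⟩ := Set.ncard_eq_one.1 hDcard
    have hzmem : z ∈ H.neighborSet u \ F.neighborSet u := by rw [hz]; rfl
    obtain ⟨a1, a2, hne12, hFeq⟩ := Set.ncard_eq_two.1 (hdeg u huy)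
    have hmuF : m u ∈ F.neighborSet u := hmadju
    set o : V := if m u = a1 then a2 else a1 with ho
    have hoF : o ∈ F.neighborSet u := by
      rw [hFeq]; rw [ho]; split <;> simp
    have hone : o ≠ m u := by
      rw [hFeq] at hmuF
      rw [ho]
      simp only [Set.mem_insert_iff, Set.mem_singleton_iff] at hmuF
      rcases hmuF with hb | hb
      · rw [if_pos hb, hb]; exact Ne.symm hne12
      · rw [if_neg (by rw [hb]; exact Ne.symm hne12), hb]; exact hne12
    have hFnbhd : F.neighborSet u = {m u, o} := by
      rw [hFeq] at hmuF ⊢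
      simp only [Set.mem_insert_iff, Set.mem_singleton_iff] at hmuF
      rcases hmuF with hb | hb
      · rw [ho, if_pos hb, ← hb]
      · rw [ho, if_neg (by rw [hb]; exact Ne.symm hne12), ← hb]
        ext t
        simp only [Set.mem_insert_iff, Set.mem_singleton_iff]
        tauto
    have hmatch0 : ∃ a, a ≠ x ∧ a ≠ y ∧ s(u, m u) = s(a, m a) := ⟨u, hux, huy, rfl⟩
    fin_cases c
    · -- color 0 : the matching edge
      refine ⟨s(u, m u), ⟨H.mem_edgeSet.2 (hle hmadju), by simp, hσ0 _ (F.mem_edgeSet.2 hmadju) hmatch0⟩, ?_⟩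
      rintro e ⟨he, hue, hσe⟩
      obtain ⟨w, rfl⟩ := Sym2.mem_iff_exists.1 hue
      have heF : s(u, w) ∈ F.edgeSet := by
        by_contra h
        rw [hσ2 _ h] at hσe
        exact absurd hσe (by decide)
      have hmatch : ∃ a, a ≠ x ∧ a ≠ y ∧ s(u, w) = s(a, m a) := by
        by_contra h
        rw [hσ1 _ heF h] at hσe
        exact absurd hσe (by decide)
      obtain ⟨a, hax, hay, heq⟩ := hmatch
      rw [Sym2.eq_iff] at heq
      rcases heq with ⟨h1, h2⟩ | ⟨h1, h2⟩
      · rw [h2, ← h1]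
      · have hma := (hmprops a hax hay).2.2.2
        have hamu : a = m u := by rw [← hma, ← h1]
        rw [h2, hamu]
    · -- color 1 : the other F-edge
      have hnomatch1 : ¬∃ a, a ≠ x ∧ a ≠ y ∧ s(u, o) = s(a, m a) := by
        rintro ⟨a, hax, hay, heq⟩
        rw [Sym2.eq_iff] at heq
        rcases heq with ⟨h1, h2⟩ | ⟨h1, h2⟩
        · rw [← h1] at h2; exact hone h2
        · have hma := (hmprops a hax hay).2.2.2
          have : a = m u := by rw [← hma, ← h1]
          rw [← this] at hone
          exact hone h2
      have hoadj : F.Adj u o := hoF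
      refine ⟨s(u, o), ⟨H.mem_edgeSet.2 (hle hoadj), by simp, hσ1 _ (F.mem_edgeSet.2 hoadj) hnomatch1⟩, ?_⟩
      rintro e ⟨he, hue, hσe⟩
      obtain ⟨w, rfl⟩ := Sym2.mem_iff_exists.1 hue
      have heF : s(u, w) ∈ F.edgeSet := by
        by_contra h
        rw [hσ2 _ h] at hσe
        exact absurd hσe (by decide)
      have hnomatch : ¬∃ a, a ≠ x ∧ a ≠ y ∧ s(u, w) = s(a, m a) := by
        intro h
        rw [hσ0 _ heF h] at hσe
        exact absurd hσe (by decide)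
      have hwF : w ∈ F.neighborSet u := F.mem_edgeSet.1 heF
      rw [hFnbhd] at hwF
      simp only [Set.mem_insert_iff, Set.mem_singleton_iff] at hwF
      rcases hwF with rfl | rfl
      · exact absurd hmatch0 hnomatch
      · rfl
    · -- color 2 : the non-F edge
      have hzH : H.Adj u z := hzmem.1
      have hzF : s(u, z) ∉ F.edgeSet := fun h => hzmem.2 (F.mem_edgeSet.1 h)
      refine ⟨s(u, z), ⟨H.mem_edgeSet.2 hzH, by simp, hσ2 _ hzF⟩, ?_⟩
      rintro e ⟨he, hue, hσe⟩
      obtain ⟨w, rfl⟩ := Sym2.mem_iff_exists.1 hue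
      have heF : s(u, w) ∉ F.edgeSet := by
        intro h
        by_cases hmm : ∃ a, a ≠ x ∧ a ≠ y ∧ s(u, w) = s(a, m a)
        · rw [hσ0 _ h hmm] at hσe; exact absurd hσe (by decide)
        · rw [hσ1 _ h hmm] at hσe; exact absurd hσe (by decide)
      have hwD : w ∈ H.neighborSet u \ F.neighborSet u :=
        ⟨H.mem_edgeSet.1 he, fun hwf => heF (F.mem_edgeSet.2 hwf)⟩
      rw [hz] at hwD
      rw [Set.mem_singleton_iff.1 hwD]
end

section
/- Let H be a cubic graph, x and y distinct nonadjacent vertices of H, x' a neighbor of x, y' a neighbor of y, and F a left-good 2-factor of H with respect to x and y containing neither the edge xx' nor the edge yy'. Then there exists a map σ: E(H) → {1, 2, 3} such that: the edges xx' and yy' receive color 3; the two edges incident to x other than xx' both receive color 1; the two edges incident to y other than yy' both receive color 2; and every vertex u ∉ {x, y} is incident to exactly one edge of each of the colors 1, 2, 3. (The restriction of such a σ to the superedge H_{x,y} is a left coloring of H_{x,y}.) -/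
open SimpleGraph

/-- `F` is a 2-factor of `H`: a spanning subgraph in which every vertex has degree
exactly `2`. -/
def IsTwoFactor {V : Type*} (H F : SimpleGraph V) : Prop :=
  F ≤ H ∧ ∀ v : V, (F.neighborSet v).ncard = 2

/-- A 2-factor `F` of `H` is left-good with respect to `x` and `y` if the components of
`F` containing `x` and `y` are distinct cycles of odd length and every other component is
a cycle of even length. -/
def LeftGood {V : Type*} (F : SimpleGraph V) (x y : V) : Prop :=
  ¬ F.Reachable x y ∧
  Odd {u : V | F.Reachable u x}.ncard ∧ Odd {u : V | F.Reachable u y}.ncard ∧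
  ∀ v : V, ¬ F.Reachable v x → ¬ F.Reachable v y → Even {u : V | F.Reachable u v}.ncard

/-!
Every component of the 2-factor `F` is a cycle. Colour the edges of each cycle alternately
`0, 1, 0, …` by the parity of their position along the cycle, starting at `x` on the cycle
through `x`, at `y` (with the two colours swapped) on the cycle through `y`, and anywhere on the
other cycles. On an even cycle this is proper at every vertex; on an odd cycle it fails exactly
at the starting vertex, whose two edges both get the first colour. The edges outside `F` form a
perfect matching of the cubic graph `H` and get the third colour.
-/

namespace SimpleGraph

variable {V : Type*}

def IsProperAt {α : Type*} (G : SimpleGraph V) (τ : Sym2 V → α) (u : V) : Prop :=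
  Set.InjOn (fun w => τ s(u, w)) (G.neighborSet u)

namespace Walk

variable {G : SimpleGraph V} [DecidableEq V]

def edgeParity {u v : V} (p : G.Walk u v) (e : Sym2 V) : ZMod 2 := p.edges.idxOf e

lemma IsTrail.edgeParity_getVert {u v : V} {p : G.Walk u v} (hp : p.IsTrail) {i : ℕ}
    (hi : i < p.length) : p.edgeParity s(p.getVert i, p.getVert (i + 1)) = i := by
  have hi' : i < p.edges.length := by rwa [length_edges]
  rw [edgeParity, ← getElem_edges hi', hp.edges_nodup.idxOf_getElem]

lemma IsTrail.edgeParity_snd {u v : V} {p : G.Walk u v} (hp : p.IsTrail) (hnil : ¬p.Nil) :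
    p.edgeParity s(u, p.snd) = 0 := by
  simpa using hp.edgeParity_getVert (not_nil_iff_lt_length.mp hnil)

lemma IsTrail.edgeParity_penultimate {u v : V} {p : G.Walk u v} (hp : p.IsTrail)
    (hnil : ¬p.Nil) : p.edgeParity s(p.penultimate, v) = (p.length - 1 : ℕ) := by
  have hlen := not_nil_iff_lt_length.mp hnil
  simpa [Nat.sub_add_cancel hlen] using hp.edgeParity_getVert (i := p.length - 1) (by omega)

variable {v : V} {p : G.Walk v v}

lemma IsCycle.ncard_support (hp : p.IsCycle) : {u | u ∈ p.support}.ncard = p.length := by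
  have hsupp : {u | u ∈ p.support} = ↑p.support.tail.toFinset := by
    ext u
    rw [Set.mem_ofPred_eq, Finset.mem_coe, List.mem_toFinset]
    refine ⟨fun hu => ?_, List.mem_of_mem_tail⟩
    rw [← p.cons_tail_support, List.mem_cons] at hu
    rcases hu with rfl | hu
    exacts [end_mem_tail_support hp.not_nil, hu]
  rw [hsupp, Set.ncard_coe_finset, List.toFinset_card_of_nodup hp.support_nodup,
    List.length_tail, length_support, Nat.add_sub_cancel]

lemma IsCycle.edgeParity_eq_zero_of_odd (hp : p.IsCycle) (hodd : Odd p.length) {w : V}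
    (hw : w ∈ p.toSubgraph.neighborSet v) : p.edgeParity s(v, w) = 0 := by
  rw [hp.neighborSet_toSubgraph_endpoint] at hw
  rcases hw with rfl | rfl
  · exact hp.isTrail.edgeParity_snd hp.not_nil
  · rw [Sym2.eq_swap, hp.isTrail.edgeParity_penultimate hp.not_nil,
      ZMod.natCast_eq_zero_iff_even]
    exact Nat.Odd.sub_odd hodd odd_one

lemma IsCycle.injOn_edgeParity (hp : p.IsCycle) {u : V} (hu : u ∈ p.support)
    (h : u ≠ v ∨ Even p.length) :
    Set.InjOn (fun w => p.edgeParity s(u, w)) (p.toSubgraph.neighborSet u) := by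
  have hlen := hp.three_le_length
  obtain ⟨i, rfl, hi⟩ := mem_support_iff_exists_getVert.mp hu
  by_cases hend : i = 0 ∨ i = p.length
  · have hv : p.getVert i = v := by rcases hend with rfl | rfl <;> simp
    obtain ⟨k, hk⟩ := h.resolve_left (not_not.mpr hv)
    rw [hv, hp.neighborSet_toSubgraph_endpoint, Set.injOn_pair]
    intro hval
    rw [hp.isTrail.edgeParity_snd hp.not_nil, Sym2.eq_swap,
      hp.isTrail.edgeParity_penultimate hp.not_nil, ← Nat.cast_zero,
      ZMod.natCast_eq_natCast_iff'] at hval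
    omega
  · obtain ⟨hi0, hilen⟩ := not_or.mp hend
    rw [hp.neighborSet_toSubgraph_internal hi0 (by omega), Set.injOn_pair]
    intro hval
    have hprev := hp.isTrail.edgeParity_getVert (i := i - 1) (by omega)
    rw [Nat.sub_add_cancel (by omega)] at hprev
    rw [Sym2.eq_swap, hprev, hp.isTrail.edgeParity_getVert (by omega),
      ZMod.natCast_eq_natCast_iff'] at hval
    omega

end Walk

lemma exists_eq_on_connectedComponents {α : Type*} {G : SimpleGraph V}
    (τs : G.ConnectedComponent → Sym2 V → α) :
    ∃ τ : Sym2 V → α,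
      ∀ u w, G.Adj u w → τ s(u, w) = τs (G.connectedComponentMk u) s(u, w) := by
  refine ⟨fun e => τs (G.connectedComponentMk e.out.1) e, fun u w huw => ?_⟩
  have hcomp : G.connectedComponentMk s(u, w).out.1 = G.connectedComponentMk u := by
    rcases Sym2.mem_iff.mp (Sym2.out_fst_mem s(u, w)) with h | h <;> rw [h]
    exact ConnectedComponent.sound huw.symm.reachable
  exact congrArg (fun c => τs c s(u, w)) hcomp

section TwoRegular

variable {F : SimpleGraph V} [Finite V] (h2 : ∀ v, (F.neighborSet v).ncard = 2)
include h2

lemma exists_isCycle_mem_support_iff (v : V) :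
    ∃ p : F.Walk v v, p.IsCycle ∧ ∀ u, u ∈ p.support ↔ F.Reachable u v := by
  have hcycles : F.IsCycles := fun w _ => h2 w
  obtain ⟨p, hp, hverts⟩ :=
    hcycles.exists_cycle_toSubgraph_verts_eq_connectedComponentSupp
      ConnectedComponent.connectedComponentMk_mem
      (Set.nonempty_of_ncard_ne_zero (by rw [h2 v]; omega))
  refine ⟨p, hp, fun u => ?_⟩
  rw [← Walk.mem_verts_toSubgraph, hverts, ConnectedComponent.mem_supp_iff,
    ConnectedComponent.eq]

lemma Walk.IsCycle.neighborSet_toSubgraph_eq {v u : V} {p : F.Walk v v} (hp : p.IsCycle)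
    (hu : u ∈ p.support) : p.toSubgraph.neighborSet u = F.neighborSet u :=
  Set.eq_of_subset_of_ncard_le (p.toSubgraph.neighborSet_subset u)
    (by rw [h2, hp.ncard_neighborSet_toSubgraph_eq_two hu]) (Set.toFinite _)

lemma exists_edgeColoring_component (v : V) :
    ∃ τ : Sym2 V → ZMod 2,
      (Odd {u | F.Reachable u v}.ncard → ∀ w, F.Adj v w → τ s(v, w) = 0) ∧
      ∀ u, F.Reachable u v → (u ≠ v ∨ Even {u | F.Reachable u v}.ncard) →
        F.IsProperAt τ u := by
  classical
  obtain ⟨p, hp, hsupp⟩ := exists_isCycle_mem_support_iff h2 v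
  have hlen : {u | F.Reachable u v}.ncard = p.length := by
    simp_rw [← hsupp]
    exact hp.ncard_support
  refine ⟨p.edgeParity, fun hodd w hw => ?_, fun u hu h => ?_⟩
  · rw [hlen] at hodd
    refine hp.edgeParity_eq_zero_of_odd hodd ?_
    rwa [hp.neighborSet_toSubgraph_eq h2 p.start_mem_support]
  · rw [hlen] at h
    have hu' := (hsupp u).mpr hu
    unfold IsProperAt
    rw [← hp.neighborSet_toSubgraph_eq h2 hu']
    exact hp.injOn_edgeParity hu' h

theorem exists_edgeColoring_of_leftGood {x y : V} (hlg : LeftGood F x y) :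
    ∃ τ : Sym2 V → ZMod 2, (∀ w, F.Adj x w → τ s(x, w) = 0) ∧
      (∀ w, F.Adj y w → τ s(y, w) = 1) ∧
      ∀ u, u ≠ x → u ≠ y → F.IsProperAt τ u := by
  have hcomp : ∀ c : F.ConnectedComponent, ∃ τ : Sym2 V → ZMod 2,
      (c = F.connectedComponentMk x → ∀ w, F.Adj x w → τ s(x, w) = 0) ∧
      (c = F.connectedComponentMk y → ∀ w, F.Adj y w → τ s(y, w) = 1) ∧
      ∀ u, F.connectedComponentMk u = c → u ≠ x → u ≠ y → F.IsProperAt τ u := by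
    obtain ⟨hxy, hx, hy, hev⟩ := hlg
    refine ConnectedComponent.ind fun v => ?_
    simp only [ConnectedComponent.eq]
    by_cases hvx : F.Reachable v x
    · obtain ⟨τ, hτx, hτ⟩ := exists_edgeColoring_component h2 x
      exact ⟨τ, fun _ => hτx hx, fun hvy => absurd (hvx.symm.trans hvy) hxy,
        fun u hu hux _ => hτ u (hu.trans hvx) (Or.inl hux)⟩
    by_cases hvy : F.Reachable v y
    · obtain ⟨τ, hτy, hτ⟩ := exists_edgeColoring_component h2 y
      refine ⟨τ + 1, fun hvx' => absurd hvx' hvx, fun _ w hw => ?_,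
        fun u hu _ huy => (add_left_injective 1).comp_injOn (hτ u (hu.trans hvy) (Or.inl huy))⟩
      rw [Pi.add_apply, hτy hy w hw, Pi.one_apply, zero_add]
    · obtain ⟨τ, -, hτ⟩ := exists_edgeColoring_component h2 v
      exact ⟨τ, fun hvx' => absurd hvx' hvx, fun hvy' => absurd hvy' hvy,
        fun u hu _ _ => hτ u hu (Or.inr (hev v hvx hvy))⟩
  choose τs hτs using hcomp
  obtain ⟨τ, hτ⟩ := exists_eq_on_connectedComponents τs
  refine ⟨τ, fun w hw => ?_, fun w hw => ?_, fun u hux huy => ?_⟩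
  · rw [hτ x w hw]
    exact (hτs _).1 rfl w hw
  · rw [hτ y w hw]
    exact (hτs _).2.1 rfl w hw
  · exact ((hτs _).2.2 u rfl hux huy).congr fun w hw => (hτ u w hw).symm

end TwoRegular

section Cubic

variable {H F : SimpleGraph V} {u : V}

lemma eq_of_adj_of_not_adj (hle : F ≤ H) (hH : (H.neighborSet u).ncard = 3)
    (hF : (F.neighborSet u).ncard = 2) {w w' : V} (hw : H.Adj u w) (hFw : ¬F.Adj u w)
    (hw' : H.Adj u w') (hFw' : ¬F.Adj u w') : w = w' := by
  have hsub : F.neighborSet u ⊆ H.neighborSet u := fun _ h => hle h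
  have hfin : (H.neighborSet u).Finite := Set.finite_of_ncard_ne_zero (by omega)
  have hdiff : (H.neighborSet u \ F.neighborSet u).ncard = 1 := by
    rw [Set.ncard_sdiff hsub (hfin.subset hsub), hH, hF]
  obtain ⟨a, ha⟩ := Set.ncard_eq_one.mp hdiff
  have hwa : w ∈ ({a} : Set V) := ha ▸ ⟨hw, hFw⟩
  have hw'a : w' ∈ ({a} : Set V) := ha ▸ ⟨hw', hFw'⟩
  exact hwa.trans hw'a.symm

lemma adj_of_ne_of_not_adj (hle : F ≤ H) (hH : (H.neighborSet u).ncard = 3)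
    (hF : (F.neighborSet u).ncard = 2) {v w : V} (hv : H.Adj u v) (hFv : ¬F.Adj u v)
    (hw : H.Adj u w) (hwv : w ≠ v) : F.Adj u w :=
  by_contra fun hFw => hwv (eq_of_adj_of_not_adj hle hH hF hw hFw hv hFv)

lemma existsUnique_edge_of_isProperAt (hH : (H.neighborSet u).ncard = 3) {σ : Sym2 V → Fin 3}
    (hσ : H.IsProperAt σ u) (c : Fin 3) : ∃! e, e ∈ H.edgeSet ∧ u ∈ e ∧ σ e = c := by
  have himage : (fun w => σ s(u, w)) '' H.neighborSet u = Set.univ :=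
    Set.eq_of_subset_of_ncard_le (Set.subset_univ _)
      (by rw [Set.ncard_univ, Nat.card_eq_fintype_card, Fintype.card_fin,
        hσ.ncard_image, hH]) Set.finite_univ
  obtain ⟨w, hw, hwc⟩ : c ∈ (fun w => σ s(u, w)) '' H.neighborSet u :=
    himage ▸ Set.mem_univ c
  refine ⟨s(u, w), ⟨hw, Sym2.mem_mk_left _ _, hwc⟩, ?_⟩
  rintro e ⟨he, hue, rfl⟩
  obtain ⟨w', rfl⟩ := Sym2.mem_iff_exists.mp hue
  rw [hσ (H.mem_edgeSet.mp he) hw hwc.symm]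

open Classical in
noncomputable def extendColoring (F : SimpleGraph V) (τ : Sym2 V → ZMod 2) (e : Sym2 V) :
    Fin 3 :=
  if e ∈ F.edgeSet then (if τ e = 0 then 0 else 1) else 2

lemma extendColoring_of_adj {τ : Sym2 V → ZMod 2} {w : V} (h : F.Adj u w) :
    F.extendColoring τ s(u, w) = if τ s(u, w) = 0 then 0 else 1 :=
  if_pos h

lemma extendColoring_of_not_adj {τ : Sym2 V → ZMod 2} {w : V} (h : ¬F.Adj u w) :
    F.extendColoring τ s(u, w) = 2 :=
  if_neg h

lemma isProperAt_extendColoring (hle : F ≤ H) (hH : (H.neighborSet u).ncard = 3)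
    (hF : (F.neighborSet u).ncard = 2) {τ : Sym2 V → ZMod 2} (hτ : F.IsProperAt τ u) :
    H.IsProperAt (F.extendColoring τ) u := by
  have hbinary : Function.Injective fun a : ZMod 2 => if a = 0 then (0 : Fin 3) else 1 := by
    decide
  have hne_two : ∀ a : ZMod 2, (if a = 0 then (0 : Fin 3) else 1) ≠ 2 := by decide
  intro w hw w' hw' heq
  by_cases hFw : F.Adj u w <;> by_cases hFw' : F.Adj u w' <;>
    simp only [extendColoring_of_adj, extendColoring_of_not_adj, hFw, hFw',
      not_false_eq_true] at heq
  · exact hτ hFw hFw' (hbinary heq)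
  · exact absurd heq (hne_two _)
  · exact absurd heq.symm (hne_two _)
  · exact eq_of_adj_of_not_adj hle hH hF hw hFw hw' hFw'

end Cubic

end SimpleGraph

/-- Colours are encoded in `Fin 3`, with `0 ↦ 1`, `1 ↦ 2`, `2 ↦ 3`. -/
theorem leftGood_two_factor_yields_left_coloring_general
    {V : Type*} [Fintype V] (H : SimpleGraph V)
    (hcubic : ∀ v : V, (H.neighborSet v).ncard = 3)
    (x y x' y' : V)
    (hx' : H.Adj x x') (hy' : H.Adj y y')
    (F : SimpleGraph V) (hF : IsTwoFactor H F) (hlg : LeftGood F x y)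
    (havoidx : ¬ F.Adj x x') (havoidy : ¬ F.Adj y y') :
    ∃ σ : Sym2 V → Fin 3,
      σ s(x, x') = 2 ∧ σ s(y, y') = 2 ∧
      (∀ e ∈ H.edgeSet, x ∈ e → e ≠ s(x, x') → σ e = 0) ∧
      (∀ e ∈ H.edgeSet, y ∈ e → e ≠ s(y, y') → σ e = 1) ∧
      ∀ u : V, u ≠ x → u ≠ y → ∀ c : Fin 3,
        ∃! e : Sym2 V, e ∈ H.edgeSet ∧ u ∈ e ∧ σ e = c := by
  obtain ⟨hle, h2⟩ := hF
  obtain ⟨τ, hτx, hτy, hτ⟩ := exists_edgeColoring_of_leftGood h2 hlg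
  refine ⟨F.extendColoring τ, extendColoring_of_not_adj havoidx,
    extendColoring_of_not_adj havoidy, ?_, ?_, fun u hux huy =>
      existsUnique_edge_of_isProperAt (hcubic u)
        (isProperAt_extendColoring hle (hcubic u) (h2 u) (hτ u hux huy))⟩
  · rintro _ he hxe hne
    obtain ⟨w, rfl⟩ := Sym2.mem_iff_exists.mp hxe
    have hw := adj_of_ne_of_not_adj hle (hcubic x) (h2 x) hx' havoidx he
      (by rintro rfl; exact hne rfl)
    rw [extendColoring_of_adj hw, if_pos (hτx w hw)]
  · rintro _ he hye hne
    obtain ⟨w, rfl⟩ := Sym2.mem_iff_exists.mp hye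
    have hw := adj_of_ne_of_not_adj hle (hcubic y) (h2 y) hy' havoidy he
      (by rintro rfl; exact hne rfl)
    rw [extendColoring_of_adj hw, if_neg (by rw [hτy w hw]; decide)]

/-- Let `H` be a cubic graph, `x, y` distinct nonadjacent vertices, `x'` a neighbor of
`x`, `y'` a neighbor of `y`, and `F` a left-good 2-factor of `H` with respect to `x` and
`y` containing neither `xx'` nor `yy'`.  Then there is a map `σ : E(H) → {1, 2, 3}`
(colors encoded as `Fin 3`, with `0 ↦ 1`, `1 ↦ 2`, `2 ↦ 3`) such that `xx'` and `yy'`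
receive color `3`, the two other edges at `x` receive color `1`, the two other edges at
`y` receive color `2`, and every vertex `u ∉ {x, y}` is incident to exactly one edge of
each of the three colors. -/
theorem leftGood_two_factor_yields_left_coloring
    {V : Type*} [Fintype V] (H : SimpleGraph V)
    (hcubic : ∀ v : V, (H.neighborSet v).ncard = 3)
    (x y x' y' : V) (hxy : x ≠ y) (hnadj : ¬ H.Adj x y)
    (hx' : H.Adj x x') (hy' : H.Adj y y')
    (F : SimpleGraph V) (hF : IsTwoFactor H F) (hlg : LeftGood F x y)
    (havoidx : ¬ F.Adj x x') (havoidy : ¬ F.Adj y y') :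
    ∃ σ : Sym2 V → Fin 3,
      σ s(x, x') = 2 ∧ σ s(y, y') = 2 ∧
      (∀ e ∈ H.edgeSet, x ∈ e → e ≠ s(x, x') → σ e = 0) ∧
      (∀ e ∈ H.edgeSet, y ∈ e → e ≠ s(y, y') → σ e = 1) ∧
      ∀ u : V, u ≠ x → u ≠ y → ∀ c : Fin 3,
        ∃! e : Sym2 V, e ∈ H.edgeSet ∧ u ∈ e ∧ σ e = c :=
  leftGood_two_factor_yields_left_coloring_general H hcubic x y x' y' hx' hy' F hF hlg havoidx
    havoidy
end
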